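/- If r(t) = (x(t), y(t)) is a solution of the planar Kepler equation r'' = -r/|r|^3 with nonzero angular momentum M = x y' - y x', then there exist constants a, b, c with c = 1/M^2 such that a·x(t) + b·y(t) + c·√(x(t)^2+y(t)^2) = 1 for all t. -/

import Mathlib

/-!
The Laplace–Runge–Lenz vector `A = v × L - r / |r|`, which in the plane has components
`(y' M - x / |r|, -x' M - y / |r|)`, is a first integral of the Kepler flow. Its dot product
with the position is `r · A = M (x y' - y x') - |r| = M² - |r|`, which is the conic
`(A / M²) · r + |r| / M² = 1`.
-/

open Real

lemma hasDerivAt_sqrt_sq_add_sq {x y : ℝ → ℝ} {x' y' t : ℝ}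
    (hx : HasDerivAt x x' t) (hy : HasDerivAt y y' t) (h : x t ^ 2 + y t ^ 2 ≠ 0) :
    HasDerivAt (fun s => √(x s ^ 2 + y s ^ 2))
      ((x t * x' + y t * y') / √(x t ^ 2 + y t ^ 2)) t := by
  refine (((hx.pow 2).add (hy.pow 2)).sqrt h).congr_deriv ?_
  simp only [Pi.add_apply, Pi.pow_apply]
  field_simp
  ring

lemma hasDerivAt_lrl_component_eq_zero {x y y' r : ℝ → ℝ} {x' y'' M t : ℝ}
    (hx : HasDerivAt x x' t) (hy' : HasDerivAt y' y'' t)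
    (hr : HasDerivAt r ((x t * x' + y t * y' t) / r t) t) (hr0 : r t ≠ 0)
    (hr2 : r t ^ 2 = x t ^ 2 + y t ^ 2) (hODE : y'' = -y t / r t ^ 3)
    (hang : x t * y' t - y t * x' = M) :
    HasDerivAt (fun s => y' s * M - x s / r s) 0 t := by
  refine ((hy'.mul_const M).sub (hx.div hr hr0)).congr_deriv ?_
  rw [hODE]
  field_simp
  linear_combination y t * hang - x' * hr2

lemma eq_of_forall_hasDerivAt_zero {f : ℝ → ℝ} (hf : ∀ t, HasDerivAt f 0 t) (s t : ℝ) :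
    f s = f t :=
  is_const_of_deriv_eq_zero (fun u => (hf u).differentiableAt) (fun u => (hf u).deriv) s t

theorem kepler_orbit_is_conic
    (x y x' y' x'' y'' : ℝ → ℝ) (M : ℝ) (hM : M ≠ 0)
    (hx' : ∀ t, HasDerivAt x (x' t) t) (hy' : ∀ t, HasDerivAt y (y' t) t)
    (hx'' : ∀ t, HasDerivAt x' (x'' t) t) (hy'' : ∀ t, HasDerivAt y' (y'' t) t)
    (hpos : ∀ t, x t ^ 2 + y t ^ 2 ≠ 0)
    (hODEx : ∀ t, x'' t = - x t / (x t ^ 2 + y t ^ 2) ^ ((3:ℝ)/2))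
    (hODEy : ∀ t, y'' t = - y t / (x t ^ 2 + y t ^ 2) ^ ((3:ℝ)/2))
    (hang : ∀ t, x t * y' t - y t * x' t = M) :
    ∃ a b c : ℝ, c = 1 / M ^ 2 ∧
      ∀ t, a * x t + b * y t + c * Real.sqrt (x t ^ 2 + y t ^ 2) = 1 := by
  set r : ℝ → ℝ := fun t => √(x t ^ 2 + y t ^ 2)
  have hr0 (t : ℝ) : r t ≠ 0 := sqrt_ne_zero'.mpr ((hpos t).lt_of_le' (by positivity))
  have hr2 (t : ℝ) : r t ^ 2 = x t ^ 2 + y t ^ 2 := sq_sqrt (by positivity)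
  have hr3 (t : ℝ) : (x t ^ 2 + y t ^ 2) ^ ((3:ℝ)/2) = r t ^ 3 :=
    rpow_div_two_eq_sqrt 3 (by positivity) |>.trans (rpow_natCast _ 3)
  have hr (t : ℝ) : HasDerivAt r ((x t * x' t + y t * y' t) / r t) t :=
    hasDerivAt_sqrt_sq_add_sq (hx' t) (hy' t) (hpos t)
  have hA₁ := eq_of_forall_hasDerivAt_zero fun t =>
    hasDerivAt_lrl_component_eq_zero (hx' t) (hy'' t) (hr t) (hr0 t) (hr2 t)
      (by rw [hODEy, hr3]) (hang t)
  -- the second component is the first one of the reflected orbit `(y, x)`, of momentum `-M`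
  have hA₂ := eq_of_forall_hasDerivAt_zero fun t =>
    hasDerivAt_lrl_component_eq_zero (y := x) (M := -M) (hy' t) (hx'' t)
      (by rw [add_comm]; exact hr t) (hr0 t) (by rw [hr2, add_comm])
      (by rw [hODEx, hr3]) (by linarith [hang t])
  refine ⟨(y' 0 * M - x 0 / r 0) / M ^ 2, (x' 0 * -M - y 0 / r 0) / M ^ 2, 1 / M ^ 2, rfl,
    fun t => ?_⟩
  rw [← hA₁ t, ← hA₂ t]
  field_simp [hr0 t]
  linear_combination M * r t * hang t + hr2 t
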